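/- For every c > 0 and every L̄ > 0 there exists a constant C such that for all ℓ ∈ (0, L̄] one has sin(Y_c(ℓ)) > 0, the function Λ_c(ℓ) := ℓ/(2·sin(Y_c(ℓ))) is differentiable, and | (d/dℓ)Λ_c(ℓ) | ≤ C·ℓ. -/

import Mathlib

open Real

/-- `Y_c(ℓ) = 2 arctan(e^c · tan((1/2) arctan(sinh(ℓ/2))))`; geometrically
`π/2 − Y_c(ℓ) = (ℓ/(2π)) Z_c(ℓ)` where `{Z_c(ℓ)}×S¹` is the circle in the standard collar
around a geodesic of length `ℓ` at hyperbolic distance `c` from the collar boundary. -/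
noncomputable def Yc (c ℓ : ℝ) : ℝ :=
  2 * Real.arctan (Real.exp c * Real.tan ((1 / 2) * Real.arctan (Real.sinh (ℓ / 2))))

/-!
Since `tan (½ arctan (sinh 2x)) = tanh x`, we have `Y_c(ℓ) = 2 arctan u` with
`u = e^c tanh (ℓ/4)`, hence `sin Y_c(ℓ) = 2u/(1 + u²)` and, writing `x = ℓ/4`,
`Λ_c(ℓ) = e^{-c} · x/tanh x + e^c · x tanh x`.
Both `x/tanh x` and `x tanh x` have derivatives of size `O(x)` for `x > 0`, because
`x (1 - tanh² x) ≤ tanh x ≤ x` there.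
-/

namespace Real

lemma tanh_pos {x : ℝ} (hx : 0 < x) : 0 < tanh x := by
  rw [tanh_eq_sinh_div_cosh]
  exact div_pos (sinh_pos_iff.mpr hx) (cosh_pos x)

lemma one_sub_tanh_sq (x : ℝ) : 1 - tanh x ^ 2 = (cosh x ^ 2)⁻¹ := by
  have := (cosh_pos x).ne'
  rw [tanh_eq_sinh_div_cosh]
  field_simp
  linear_combination cosh_sq_sub_sinh_sq x

lemma hasDerivAt_tanh (x : ℝ) : HasDerivAt tanh (1 - tanh x ^ 2) x := by
  have h : HasDerivAt (fun y => sinh y / cosh y) (1 - tanh x ^ 2) x := by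
    refine ((hasDerivAt_sinh x).div (hasDerivAt_cosh x) (cosh_pos x).ne').congr_deriv ?_
    have := (cosh_pos x).ne'
    rw [one_sub_tanh_sq]
    field_simp
    linear_combination cosh_sq_sub_sinh_sq x
  rwa [← funext tanh_eq_sinh_div_cosh] at h

lemma tanh_le_self {x : ℝ} (hx : 0 ≤ x) : tanh x ≤ x := by
  have hd : ∀ y, HasDerivAt (fun y => y - tanh y) (tanh y ^ 2) y := fun y =>
    ((hasDerivAt_id y).sub (hasDerivAt_tanh y)).congr_deriv (by simp)
  have hmono : Monotone (fun y => y - tanh y) :=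
    monotone_of_deriv_nonneg (fun y => (hd y).differentiableAt)
      fun y => (hd y).deriv ▸ sq_nonneg _
  simpa using hmono hx

lemma mul_one_sub_tanh_sq_le_tanh {x : ℝ} (hx : 0 ≤ x) : x * (1 - tanh x ^ 2) ≤ tanh x := by
  have h : 2 * x ≤ 2 * sinh x * cosh x := sinh_two_mul x ▸ self_le_sinh_iff.mpr (by linarith)
  rw [one_sub_tanh_sq, tanh_eq_sinh_div_cosh, ← div_eq_mul_inv,
    div_le_div_iff₀ (by positivity) (cosh_pos x)]
  nlinarith [cosh_pos x]

lemma two_mul_tanh_div_one_sub_tanh_sq (x : ℝ) :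
    2 * tanh x / (1 - tanh x ^ 2) = sinh (2 * x) := by
  have := (cosh_pos x).ne'
  rw [one_sub_tanh_sq, tanh_eq_sinh_div_cosh, sinh_two_mul]
  field_simp

lemma tan_half_mul_arctan_sinh (x : ℝ) : tan (1 / 2 * arctan (sinh (2 * x))) = tanh x := by
  rw [← two_mul_tanh_div_one_sub_tanh_sq, ← two_mul_arctan (neg_one_lt_tanh x) (tanh_lt_one x),
    ← mul_assoc, one_div_mul_cancel two_ne_zero, one_mul, tan_arctan]

lemma sin_two_mul_arctan (u : ℝ) : sin (2 * arctan u) = 2 * u / (1 + u ^ 2) := by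
  rw [sin_eq_two_mul_tan_half_div_one_add_tan_half_sq, mul_div_cancel_left₀ _ two_ne_zero,
    tan_arctan]

lemma exists_hasDerivAt_div_tanh_abs_le {x : ℝ} (hx : 0 < x) :
    ∃ d, HasDerivAt (fun y => y / tanh y) d x ∧ |d| ≤ x := by
  have ht := tanh_pos hx
  refine ⟨_, (hasDerivAt_id x).div (hasDerivAt_tanh x) ht.ne', ?_⟩
  have hlower := mul_one_sub_tanh_sq_le_tanh hx.le
  have hupper := tanh_le_self hx.le
  simp only [id_eq, one_mul]
  rw [abs_of_nonneg (div_nonneg (by linarith) (sq_nonneg _)), div_le_iff₀ (by positivity)]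
  linarith

lemma exists_hasDerivAt_mul_tanh_abs_le {x : ℝ} (hx : 0 < x) :
    ∃ d, HasDerivAt (fun y => y * tanh y) d x ∧ |d| ≤ 2 * x := by
  refine ⟨_, (hasDerivAt_id x).mul (hasDerivAt_tanh x), ?_⟩
  have ht := tanh_pos hx
  have hupper := tanh_le_self hx.le
  have hsq := tanh_sq_lt_one x
  simp only [id_eq, one_mul]
  rw [abs_of_nonneg (by nlinarith)]
  nlinarith

end Real

lemma sin_Yc (c ℓ : ℝ) :
    sin (Yc c ℓ) = 2 * (exp c * tanh (ℓ / 4)) / (1 + (exp c * tanh (ℓ / 4)) ^ 2) := by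
  rw [Yc, show ℓ / 2 = 2 * (ℓ / 4) by ring, tan_half_mul_arctan_sinh, sin_two_mul_arctan]

lemma sin_Yc_pos (c : ℝ) {ℓ : ℝ} (hℓ : 0 < ℓ) : 0 < sin (Yc c ℓ) := by
  have := tanh_pos (by linarith : 0 < ℓ / 4)
  rw [sin_Yc]
  positivity

lemma div_two_mul_sin_Yc_eq (c : ℝ) :
    (fun l => l / (2 * sin (Yc c l))) =
      fun l => exp (-c) * (l / 4 / tanh (l / 4)) + exp c * (l / 4 * tanh (l / 4)) := by
  funext l
  rw [sin_Yc, exp_neg]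
  rcases eq_or_ne (tanh (l / 4)) 0 with h | h
  · simp [h]
  · field_simp
    ring

theorem circle_length_derivative_bound_general (c : ℝ) (Lbar : ℝ) :
    ∃ C : ℝ, ∀ ℓ : ℝ, ℓ ∈ Set.Ioc 0 Lbar →
      0 < Real.sin (Yc c ℓ) ∧
      DifferentiableAt ℝ (fun l => l / (2 * Real.sin (Yc c l))) ℓ ∧
      |deriv (fun l => l / (2 * Real.sin (Yc c l))) ℓ| ≤ C * ℓ := by
  refine ⟨(exp (-c) + 2 * exp c) / 16, fun ℓ ⟨hℓ, _⟩ => ?_⟩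
  have hx : 0 < ℓ / 4 := by linarith
  obtain ⟨d₁, hd₁, hb₁⟩ := exists_hasDerivAt_div_tanh_abs_le hx
  obtain ⟨d₂, hd₂, hb₂⟩ := exists_hasDerivAt_mul_tanh_abs_le hx
  have hΛ : HasDerivAt (fun l => l / (2 * sin (Yc c l)))
      ((exp (-c) * d₁ + exp c * d₂) * (1 / 4)) ℓ := by
    rw [div_two_mul_sin_Yc_eq]
    exact ((hd₁.const_mul _).add (hd₂.const_mul _)).comp ℓ ((hasDerivAt_id ℓ).div_const 4)
  refine ⟨sin_Yc_pos c hℓ, hΛ.differentiableAt, ?_⟩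
  rw [hΛ.deriv]
  calc |(exp (-c) * d₁ + exp c * d₂) * (1 / 4)|
      ≤ (exp (-c) * |d₁| + exp c * |d₂|) * (1 / 4) := by
        rw [abs_mul, abs_of_pos (by norm_num : (0 : ℝ) < 1 / 4)]
        gcongr
        refine (abs_add_le _ _).trans ?_
        rw [abs_mul, abs_mul, abs_of_pos (exp_pos _), abs_of_pos (exp_pos _)]
    _ ≤ (exp (-c) * (ℓ / 4) + exp c * (2 * (ℓ / 4))) * (1 / 4) := by gcongr
    _ = (exp (-c) + 2 * exp c) / 16 * ℓ := by ring

/-- The half-length `Λ_c(ℓ) = ℓ/(2 sin(Y_c(ℓ)))` of the circle at distance `c` from the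
collar boundary is well defined and differentiable with `|Λ_c′(ℓ)| ≤ C ℓ` for
`ℓ ∈ (0, L̄]`. -/
theorem circle_length_derivative_bound (c : ℝ) (hc : 0 < c) (Lbar : ℝ) (hL : 0 < Lbar) :
    ∃ C : ℝ, ∀ ℓ : ℝ, ℓ ∈ Set.Ioc 0 Lbar →
      0 < Real.sin (Yc c ℓ) ∧
      DifferentiableAt ℝ (fun l => l / (2 * Real.sin (Yc c l))) ℓ ∧
      |deriv (fun l => l / (2 * Real.sin (Yc c l))) ℓ| ≤ C * ℓ :=
  circle_length_derivative_bound_general c Lbar
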